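/- arXiv:1903.01375 — 5 statements merged into one kernel-verified Lean document; each statement's English description precedes it below -/
import Mathlib

section
/- For every short impartial game G played by three players under the normal play convention (the player unable to move loses uniquely), the outcome set o(G) is a proper subset of {N, O, P}; i.e., not all three players can have winning strategies. -/
inductive IGame : Type where
  | mk : List IGame → IGame

namespace IGame

def opts : IGame → List IGame
  | mk l => l

theorem sizeOf_lt_of_mem {g G : IGame} (h : g ∈ G.opts) : sizeOf g < sizeOf G := by
  cases G with
  | mk l =>
    have h2 : g ∈ l := h
    have := List.sizeOf_lt_of_mem h2
    simp only [mk.sizeOf_spec]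
    omega

def add : IGame → IGame → IGame
  | G, H =>
    mk ((G.opts.attach.map fun g => add g.1 H) ++ (H.opts.attach.map fun h => add G h.1))
termination_by G H => sizeOf G + sizeOf H
decreasing_by
  · have := sizeOf_lt_of_mem g.2; omega
  · have := sizeOf_lt_of_mem h.2; omega

inductive Player : Type where
  | N | O | P
  deriving DecidableEq

def out : IGame → Player → Prop
  | G, .N => ∃ g : {x // x ∈ G.opts}, out g.1 .P
  | G, .O => ∀ g : {x // x ∈ G.opts}, out g.1 .N
  | G, .P => ∀ g : {x // x ∈ G.opts}, out g.1 .O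
termination_by G _ => sizeOf G
decreasing_by
  all_goals exact sizeOf_lt_of_mem g.2

theorem out_N {G : IGame} : out G .N ↔ ∃ g ∈ G.opts, out g .P := by
  rw [out]
  exact ⟨fun ⟨g, h⟩ => ⟨g.1, g.2, h⟩, fun ⟨g, hm, h⟩ => ⟨⟨g, hm⟩, h⟩⟩

theorem out_O {G : IGame} : out G .O ↔ ∀ g ∈ G.opts, out g .N := by
  rw [out]
  exact ⟨fun h g hm => h ⟨g, hm⟩, fun h g => h g.1 g.2⟩

theorem out_P {G : IGame} : out G .P ↔ ∀ g ∈ G.opts, out g .O := by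
  rw [out]
  exact ⟨fun h g hm => h ⟨g, hm⟩, fun h g => h g.1 g.2⟩

def outcome (G : IGame) : Set Player := {p | out G p}

def nim : Nat → IGame
  | 0 => mk []
  | n+1 => mk ((nim n).opts ++ [nim n])

end IGame

open IGame in
theorem not_all_three : ∀ (G : IGame), ¬ (out G .N ∧ out G .O ∧ out G .P) := by
  intro G
  induction G using IGame.rec (motive_2 := fun l => ∀ g ∈ l, ¬ (out g .N ∧ out g .O ∧ out g .P)) with
  | mk l ih =>
    rintro ⟨hN, hO, hP⟩
    obtain ⟨g, hg, hgP⟩ := out_N.1 hN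
    exact ih g hg ⟨out_O.1 hO g hg, out_P.1 hP g hg, hgP⟩
  | nil => simp_all
  | cons h t hh ht =>
    rename_i g hmem
    cases hmem with
    | head => exact hh
    | tail _ hmem => exact ht g hmem


open IGame in
/-- For every short three-player impartial game, the outcome set is a proper
subset of `{N, O, P}`. -/
theorem outcome_proper_subset (G : IGame) :
    IGame.outcome G ⊂ {Player.N, Player.O, Player.P} := by
  constructor
  · intro p _
    cases p <;> simp
  · intro hsub
    rcases not_all_three G with h
    by_cases hN : out G .N
    · by_cases hO : out G .O
      · have hP : ¬ out G .P := fun hP => h ⟨hN, hO, hP⟩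
        exact hP (hsub (by simp))
      · exact hO (hsub (by simp))
    · exact hN (hsub (by simp))
end

section
/- (Next Generation) If N ∉ o(H), then o(G+H) ⊆ o(G), for three-player impartial games G, H under normal play. -/
namespace IGame

theorem mem_opts_add {x G H : IGame} :
    x ∈ (add G H).opts ↔ (∃ g ∈ G.opts, x = add g H) ∨ (∃ h ∈ H.opts, x = add G h) := by
  rw [add]
  simp only [opts, List.mem_append, List.mem_map, List.mem_attach, true_and]
  constructor
  · rintro (⟨⟨g, hg⟩, rfl⟩ | ⟨⟨h, hh⟩, rfl⟩)
    · exact Or.inl ⟨g, hg, rfl⟩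
    · exact Or.inr ⟨h, hh, rfl⟩
  · rintro (⟨g, hg, rfl⟩ | ⟨h, hh, rfl⟩)
    · exact Or.inl ⟨⟨g, hg⟩, rfl⟩
    · exact Or.inr ⟨⟨h, hh⟩, rfl⟩

theorem sizeOf_pos (G : IGame) : 0 < sizeOf G := by
  cases G with
  | mk l => simp only [mk.sizeOf_spec]; omega

theorem key : ∀ n G H, sizeOf G + sizeOf H ≤ n →
    (¬ out H .N → ∀ p, out (add G H) p → out G p) ∧
    (¬ out H .O → out (add G H) .O → out G .N) ∧
    (¬ out H .P → out (add G H) .P → out G .N) := by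
  intro n
  induction n with
  | zero =>
    intro G H hle
    have := sizeOf_pos G
    omega
  | succ n ih =>
    intro G H hle
    refine ⟨?_, ?_, ?_⟩
    · -- main claim
      intro hH p hGH
      cases p with
      | N =>
        rw [out_N] at hGH
        obtain ⟨x, hx, hxP⟩ := hGH
        rcases mem_opts_add.mp hx with ⟨g, hg, rfl⟩ | ⟨h', hh', rfl⟩
        · have hlt := sizeOf_lt_of_mem hg
          have := (ih g H (by omega)).1 hH .P hxP
          exact out_N.mpr ⟨g, hg, this⟩
        · have hlt := sizeOf_lt_of_mem hh'
          have hh'P : ¬ out h' .P := fun hp => hH (out_N.mpr ⟨h', hh', hp⟩)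
          exact (ih G h' (by omega)).2.2 hh'P hxP
      | O =>
        rw [out_O] at hGH ⊢
        intro g hg
        have hlt := sizeOf_lt_of_mem hg
        have := hGH (add g H) (mem_opts_add.mpr (Or.inl ⟨g, hg, rfl⟩))
        exact (ih g H (by omega)).1 hH .N this
      | P =>
        rw [out_P] at hGH ⊢
        intro g hg
        have hlt := sizeOf_lt_of_mem hg
        have := hGH (add g H) (mem_opts_add.mpr (Or.inl ⟨g, hg, rfl⟩))
        exact (ih g H (by omega)).1 hH .O this
    · -- claim X
      intro hHO hGHO
      rw [out_O] at hHO
      push_neg at hHO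
      obtain ⟨k, hk, hkN⟩ := hHO
      have hltk := sizeOf_lt_of_mem hk
      have hGk : out (add G k) .N :=
        out_O.mp hGHO (add G k) (mem_opts_add.mpr (Or.inr ⟨k, hk, rfl⟩))
      rw [out_N] at hGk
      obtain ⟨x, hx, hxP⟩ := hGk
      rcases mem_opts_add.mp hx with ⟨g, hg, rfl⟩ | ⟨k', hk', rfl⟩
      · have hlt := sizeOf_lt_of_mem hg
        have := (ih g k (by omega)).1 hkN .P hxP
        exact out_N.mpr ⟨g, hg, this⟩
      · have hlt := sizeOf_lt_of_mem hk'
        have hk'P : ¬ out k' .P := fun hp => hkN (out_N.mpr ⟨k', hk', hp⟩)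
        exact (ih G k' (by omega)).2.2 hk'P hxP
    · -- claim Z
      intro hHP hGHP
      rw [out_P] at hHP
      push_neg at hHP
      obtain ⟨k, hk, hkO⟩ := hHP
      have hltk := sizeOf_lt_of_mem hk
      have hGk : out (add G k) .O :=
        out_P.mp hGHP (add G k) (mem_opts_add.mpr (Or.inr ⟨k, hk, rfl⟩))
      exact (ih G k (by omega)).2.1 hkO hGk

end IGame

open IGame in
/-- (Next Generation) If Next has no winning strategy in `H`, then
`o(G+H) ⊆ o(G)`. -/
theorem next_generation (G H : IGame) (h : ¬ out H Player.N) :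
    IGame.outcome (IGame.add G H) ⊆ IGame.outcome G := by
  intro p hp
  exact (IGame.key (sizeOf G + sizeOf H) G H le_rfl).1 h p hp
end

section
/- A game G is undetermined if o(G) = ∅. If G and H are undetermined three-player impartial games, then G+H is undetermined. -/
namespace IGame

theorem add_opts (G H : IGame) : (add G H).opts =
    (G.opts.attach.map fun g => add g.1 H) ++ (H.opts.attach.map fun h => add G h.1) := by
  rw [add]; rfl

theorem mem_add_opts {x : IGame} {G H : IGame} : x ∈ (add G H).opts ↔
    (∃ g ∈ G.opts, x = add g H) ∨ (∃ h ∈ H.opts, x = add G h) := by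
  simp [add_opts, List.mem_append, List.mem_map, List.mem_attach, eq_comm]

theorem out_add_N {G H : IGame} : out (add G H) .N ↔
    (∃ g ∈ G.opts, out (add g H) .P) ∨ (∃ h ∈ H.opts, out (add G h) .P) := by
  rw [out_N]
  constructor
  · rintro ⟨x, hx, ho⟩
    rcases mem_add_opts.1 hx with ⟨g, hg, rfl⟩ | ⟨h, hh, rfl⟩
    · exact Or.inl ⟨g, hg, ho⟩
    · exact Or.inr ⟨h, hh, ho⟩
  · rintro (⟨g, hg, ho⟩ | ⟨h, hh, ho⟩)
    · exact ⟨add g H, mem_add_opts.2 (Or.inl ⟨g, hg, rfl⟩), ho⟩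
    · exact ⟨add G h, mem_add_opts.2 (Or.inr ⟨h, hh, rfl⟩), ho⟩

theorem out_add_O {G H : IGame} : out (add G H) .O ↔
    (∀ g ∈ G.opts, out (add g H) .N) ∧ (∀ h ∈ H.opts, out (add G h) .N) := by
  rw [out_O]
  constructor
  · intro h
    exact ⟨fun g hg => h _ (mem_add_opts.2 (Or.inl ⟨g, hg, rfl⟩)),
           fun h' hh => h _ (mem_add_opts.2 (Or.inr ⟨h', hh, rfl⟩))⟩
  · rintro ⟨h1, h2⟩ x hx
    rcases mem_add_opts.1 hx with ⟨g, hg, rfl⟩ | ⟨h', hh, rfl⟩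
    · exact h1 g hg
    · exact h2 h' hh

theorem out_add_P {G H : IGame} : out (add G H) .P ↔
    (∀ g ∈ G.opts, out (add g H) .O) ∧ (∀ h ∈ H.opts, out (add G h) .O) := by
  rw [out_P]
  constructor
  · intro h
    exact ⟨fun g hg => h _ (mem_add_opts.2 (Or.inl ⟨g, hg, rfl⟩)),
           fun h' hh => h _ (mem_add_opts.2 (Or.inr ⟨h', hh, rfl⟩))⟩
  · rintro ⟨h1, h2⟩ x hx
    rcases mem_add_opts.1 hx with ⟨g, hg, rfl⟩ | ⟨h', hh, rfl⟩
    · exact h1 g hg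
    · exact h2 h' hh

theorem out_add_comm (G H : IGame) (p : Player) :
    out (add G H) p ↔ out (add H G) p := by
  cases p with
  | N =>
    rw [out_add_N, out_add_N, or_comm]
    constructor
    · rintro (⟨h, hh, ho⟩ | ⟨g, hg, ho⟩)
      · exact Or.inl ⟨h, hh, (out_add_comm G h .P).1 ho⟩
      · exact Or.inr ⟨g, hg, (out_add_comm g H .P).1 ho⟩
    · rintro (⟨h, hh, ho⟩ | ⟨g, hg, ho⟩)
      · exact Or.inl ⟨h, hh, (out_add_comm G h .P).2 ho⟩
      · exact Or.inr ⟨g, hg, (out_add_comm g H .P).2 ho⟩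
  | O =>
    rw [out_add_O, out_add_O, and_comm]
    constructor
    · rintro ⟨h1, h2⟩
      exact ⟨fun h hh => (out_add_comm G h .N).1 (h1 h hh),
             fun g hg => (out_add_comm g H .N).1 (h2 g hg)⟩
    · rintro ⟨h1, h2⟩
      exact ⟨fun h hh => (out_add_comm G h .N).2 (h1 h hh),
             fun g hg => (out_add_comm g H .N).2 (h2 g hg)⟩
  | P =>
    rw [out_add_P, out_add_P, and_comm]
    constructor
    · rintro ⟨h1, h2⟩
      exact ⟨fun h hh => (out_add_comm G h .O).1 (h1 h hh),
             fun g hg => (out_add_comm g H .O).1 (h2 g hg)⟩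
    · rintro ⟨h1, h2⟩
      exact ⟨fun h hh => (out_add_comm G h .O).2 (h1 h hh),
             fun g hg => (out_add_comm g H .O).2 (h2 g hg)⟩
termination_by sizeOf G + sizeOf H
decreasing_by
  all_goals first
    | (have := sizeOf_lt_of_mem hh; omega)
    | (have := sizeOf_lt_of_mem hg; omega)

theorem key_s4 (X Y : IGame) :
    (¬ out X .N → ¬ out Y .P → ¬ out (add X Y) .P) ∧
    (¬ out X .N → ¬ out Y .O → ¬ out (add X Y) .O) ∧
    (¬ out X .N → ¬ out Y .N → ¬ out (add X Y) .N) := by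
  refine ⟨?_, ?_, ?_⟩
  · intro hX hY hP
    rw [out_P] at hY
    push_neg at hY
    obtain ⟨y0, hy0m, hy0⟩ := hY
    exact (key_s4 X y0).2.1 hX hy0 ((out_add_P.1 hP).2 y0 hy0m)
  · intro hX hY hO
    rw [out_O] at hY
    push_neg at hY
    obtain ⟨y1, hy1m, hy1⟩ := hY
    exact (key_s4 X y1).2.2 hX hy1 ((out_add_O.1 hO).2 y1 hy1m)
  · intro hX hY hN
    rw [out_N] at hX hY
    push_neg at hX hY
    rcases out_add_N.1 hN with ⟨g, hg, hPg⟩ | ⟨h, hh, hPh⟩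
    · exact (key_s4 Y g).1 (by rw [out_N]; push_neg; exact hY) (hX g hg)
        ((out_add_comm g Y .P).1 hPg)
    · exact (key_s4 X h).1 (by rw [out_N]; push_neg; exact hX) (hY h hh) hPh
termination_by sizeOf X + sizeOf Y
decreasing_by
  · have := sizeOf_lt_of_mem hy0m; omega
  · have := sizeOf_lt_of_mem hy1m; omega
  · have := sizeOf_lt_of_mem hg; omega
  · have := sizeOf_lt_of_mem hh; omega

end IGame

open IGame in
/-- A sum of two undetermined games is undetermined. -/
theorem sum_undetermined (G H : IGame)
    (hG : IGame.outcome G = ∅) (hH : IGame.outcome H = ∅) :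
    IGame.outcome (IGame.add G H) = ∅ := by
  have hG' : ∀ p, ¬ out G p := fun p hp => Set.eq_empty_iff_forall_notMem.1 hG p hp
  have hH' : ∀ p, ¬ out H p := fun p hp => Set.eq_empty_iff_forall_notMem.1 hH p hp
  apply Set.eq_empty_iff_forall_notMem.2
  intro p hp
  have hp' : out (add G H) p := hp
  cases p with
  | N => exact (key_s4 G H).2.2 (hG' .N) (hH' .N) hp'
  | O =>
    have h1 := hH' .O
    rw [out_O] at h1
    push_neg at h1
    obtain ⟨h1g, h1m, h1n⟩ := h1
    exact (key_s4 G h1g).2.2 (hG' .N) h1n ((out_add_O.1 hp').2 h1g h1m)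
  | P =>
    have h1 := hH' .P
    rw [out_P] at h1
    push_neg at h1
    obtain ⟨h1g, h1m, h1n⟩ := h1
    exact (key_s4 G h1g).2.1 (hG' .N) h1n ((out_add_P.1 hp').2 h1g h1m)
end

section
/- (Nim Stability) Let G be a game such that every subposition H of G (including G itself) satisfies o(H + *4) = o(H + *3). Then o(G + *m) = o(G + *3) for all m ≥ 3, for three-player impartial games under normal play. -/
namespace IGame

/-- `H` is a subposition of `G`: reachable from `G` by a (possibly empty)
sequence of moves. -/
def Subpos (H G : IGame) : Prop :=
  Relation.ReflTransGen (fun a b => a ∈ b.opts) H G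

theorem opts_add (G H : IGame) :
    (add G H).opts = G.opts.map (add · H) ++ H.opts.map (add G ·) := by
  rw [add]
  simp [opts]

theorem opts_nim (m : ℕ) : (nim m).opts = (List.range m).map nim := by
  induction m with
  | zero => rfl
  | succ n ih =>
    show (nim n).opts ++ [nim n] = _
    simp [ih, List.range_succ]

def optOutcomes (G : IGame) : Set (Set Player) :=
  outcome '' {g | g ∈ G.opts}

theorem optOutcomes_add_nim (H : IGame) (m : ℕ) :
    (add H (nim m)).optOutcomes =
      (fun a => outcome (add a (nim m))) '' {a | a ∈ H.opts} ∪
        (fun k => outcome (add H (nim k))) '' Set.Iio m := by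
  ext s
  simp [optOutcomes, opts_add, opts_nim, or_and_right, exists_or]

theorem outcome_eq_of_optOutcomes_eq {G G' : IGame} (h : G.optOutcomes = G'.optOutcomes) :
    G.outcome = G'.outcome := by
  have hex : ∀ q, (∃ g ∈ G.opts, out g q) ↔ ∃ g ∈ G'.opts, out g q := fun q => by
    simpa [optOutcomes, outcome] using congrArg (fun S => ∃ s ∈ S, q ∈ s) h
  have hall : ∀ q, (∀ g ∈ G.opts, out g q) ↔ ∀ g ∈ G'.opts, out g q := fun q => by
    simpa [optOutcomes, outcome] using congrArg (fun S => ∀ s ∈ S, q ∈ s) h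
  ext p
  cases p
  · exact (out_N.trans (hex _)).trans out_N.symm
  · exact (out_O.trans (hall _)).trans out_O.symm
  · exact (out_P.trans (hall _)).trans out_P.symm

theorem _root_.Set.image_Iio_eq_image_Iio_succ_of_eqOn_Ico {α : Type*} {f : ℕ → α} {n m : ℕ}
    (hnm : n < m) (hf : ∀ k ∈ Set.Ico n m, f k = f n) :
    f '' Set.Iio m = f '' Set.Iio (n + 1) := by
  refine subset_antisymm ?_ (Set.image_mono (Set.Iio_subset_Iio (by omega)))
  rintro _ ⟨k, hk, rfl⟩
  by_cases hkn : k < n + 1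
  · exact ⟨k, hkn, rfl⟩
  · exact ⟨n, Nat.lt_succ_self n, (hf k ⟨by omega, hk⟩).symm⟩

theorem outcome_add_nim_eq_of_subpos {n : ℕ} {G : IGame}
    (hG : ∀ H, Subpos H G → outcome (add H (nim (n + 1))) = outcome (add H (nim n)))
    (m : ℕ) (hm : n ≤ m) (H : IGame) (hH : Subpos H G) :
    outcome (add H (nim m)) = outcome (add H (nim n)) := by
  obtain rfl | rfl | hm : m = n ∨ m = n + 1 ∨ n + 1 < m := by omega
  · rfl
  · exact hG H hH
  have hopts : Set.EqOn (fun a => outcome (add a (nim m)))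
      (fun a => outcome (add a (nim (n + 1)))) {a | a ∈ H.opts} := fun a ha =>
    have haG : Subpos a G := .head ha hH
    (outcome_add_nim_eq_of_subpos hG m (by omega) a haG).trans (hG a haG).symm
  have hrow : ∀ k ∈ Set.Ico n m, outcome (add H (nim k)) = outcome (add H (nim n)) :=
    fun k hk => outcome_add_nim_eq_of_subpos hG k hk.1 H hH
  rw [← hG H hH]
  apply outcome_eq_of_optOutcomes_eq
  rw [optOutcomes_add_nim, optOutcomes_add_nim, Set.image_congr hopts,
    Set.image_Iio_eq_image_Iio_succ_of_eqOn_Ico (by omega) hrow]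
termination_by (m, sizeOf H)
decreasing_by
  · exact Prod.Lex.right m (sizeOf_lt_of_mem ha)
  · exact Prod.Lex.left _ _ hk.2

/-- (Nim Stability) If every subposition `H` of `G` satisfies
`o(H + *4) = o(H + *3)`, then `o(G + *m) = o(G + *3)` for all `m ≥ 3`. -/
theorem nim_stability (G : IGame)
    (h : ∀ H : IGame, Subpos H G → outcome (add H (nim 4)) = outcome (add H (nim 3))) :
    ∀ m : ℕ, 3 ≤ m → outcome (add G (nim m)) = outcome (add G (nim 3)) :=
  fun m hm => outcome_add_nim_eq_of_subpos h m hm G .refl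

end IGame
end

section
/- (Nim Periodicity) Let G be a three-player impartial game such that every option G' is 3-periodic and o(G) = o(*+*+*+G). Then G is 3-periodic, where a game G is 3-periodic if the sequence of outcomes o(k·* + G) for k = 0, 1, 2, ... has period 3. -/
namespace IGame

/-- `k·* + G`: the sum of `k` copies of `*` with `G`. -/
def addStars : ℕ → IGame → IGame
  | 0, G => G
  | k+1, G => add (nim 1) (addStars k G)

/-- `G` is 3-periodic if the sequence of outcomes `o(k·* + G)` has period 3. -/
def Periodic3 (G : IGame) : Prop :=
  ∀ k : ℕ, outcome (addStars k G) = outcome (addStars (k + 3) G)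

/-- Bisimulation of game trees. -/
def Bisim : IGame → IGame → Prop
  | G, H =>
    (∀ g : {x // x ∈ G.opts}, ∃ h : {x // x ∈ H.opts}, Bisim g.1 h.1) ∧
    (∀ h : {x // x ∈ H.opts}, ∃ g : {x // x ∈ G.opts}, Bisim g.1 h.1)
termination_by G H => sizeOf G + sizeOf H
decreasing_by
  · have := sizeOf_lt_of_mem g.2; have := sizeOf_lt_of_mem h.2; omega
  · have := sizeOf_lt_of_mem g.2; have := sizeOf_lt_of_mem h.2; omega

theorem bisim_iff {G H : IGame} : Bisim G H ↔
    (∀ g ∈ G.opts, ∃ h ∈ H.opts, Bisim g h) ∧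
    (∀ h ∈ H.opts, ∃ g ∈ G.opts, Bisim g h) := by
  rw [Bisim]
  constructor
  · rintro ⟨h1, h2⟩
    refine ⟨fun g hg => ?_, fun h hh => ?_⟩
    · obtain ⟨h, hb⟩ := h1 ⟨g, hg⟩; exact ⟨h.1, h.2, hb⟩
    · obtain ⟨g, hb⟩ := h2 ⟨h, hh⟩; exact ⟨g.1, g.2, hb⟩
  · rintro ⟨h1, h2⟩
    refine ⟨fun g => ?_, fun h => ?_⟩
    · obtain ⟨h, hh, hb⟩ := h1 g.1 g.2; exact ⟨⟨h, hh⟩, hb⟩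
    · obtain ⟨g, hg, hb⟩ := h2 h.1 h.2; exact ⟨⟨g, hg⟩, hb⟩

theorem bisim_refl (G : IGame) : Bisim G G := by
  rw [bisim_iff]
  exact ⟨fun g hg => ⟨g, hg, bisim_refl g⟩, fun g hg => ⟨g, hg, bisim_refl g⟩⟩
termination_by sizeOf G
decreasing_by all_goals exact sizeOf_lt_of_mem hg

theorem bisim_symm {G H : IGame} (h : Bisim G H) : Bisim H G := by
  rw [bisim_iff] at h ⊢
  obtain ⟨h1, h2⟩ := h
  refine ⟨fun x hx => ?_, fun x hx => ?_⟩
  · obtain ⟨g, hg, hb⟩ := h2 x hx; exact ⟨g, hg, bisim_symm hb⟩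
  · obtain ⟨g, hg, hb⟩ := h1 x hx; exact ⟨g, hg, bisim_symm hb⟩
termination_by sizeOf G + sizeOf H
decreasing_by
  · have := sizeOf_lt_of_mem hx; have := sizeOf_lt_of_mem hg; omega
  · have := sizeOf_lt_of_mem hx; have := sizeOf_lt_of_mem hg; omega

theorem bisim_trans {G H K : IGame} (h1 : Bisim G H) (h2 : Bisim H K) : Bisim G K := by
  rw [bisim_iff] at h1 h2 ⊢
  refine ⟨fun g hg => ?_, fun k hk => ?_⟩
  · obtain ⟨h, hh, hb1⟩ := h1.1 g hg
    obtain ⟨k, hk, hb2⟩ := h2.1 h hh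
    exact ⟨k, hk, bisim_trans hb1 hb2⟩
  · obtain ⟨h, hh, hb2⟩ := h2.2 k hk
    obtain ⟨g, hg, hb1⟩ := h1.2 h hh
    exact ⟨g, hg, bisim_trans hb1 hb2⟩
termination_by sizeOf G + sizeOf H + sizeOf K
decreasing_by
  · have := sizeOf_lt_of_mem hg; have := sizeOf_lt_of_mem hh; have := sizeOf_lt_of_mem hk; omega
  · have := sizeOf_lt_of_mem hg; have := sizeOf_lt_of_mem hh; have := sizeOf_lt_of_mem hk; omega

theorem bisim_out {G H : IGame} (hb : Bisim G H) (p : Player) : out G p ↔ out H p := by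
  rw [bisim_iff] at hb
  cases p with
  | N =>
    rw [out_N, out_N]
    constructor
    · rintro ⟨g, hg, hp⟩
      obtain ⟨h, hh, hb'⟩ := hb.1 g hg
      exact ⟨h, hh, (bisim_out hb' .P).mp hp⟩
    · rintro ⟨h, hh, hp⟩
      obtain ⟨g, hg, hb'⟩ := hb.2 h hh
      exact ⟨g, hg, (bisim_out hb' .P).mpr hp⟩
  | O =>
    rw [out_O, out_O]
    constructor
    · intro hall h hh
      obtain ⟨g, hg, hb'⟩ := hb.2 h hh
      exact (bisim_out hb' .N).mp (hall g hg)
    · intro hall g hg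
      obtain ⟨h, hh, hb'⟩ := hb.1 g hg
      exact (bisim_out hb' .N).mpr (hall h hh)
  | P =>
    rw [out_P, out_P]
    constructor
    · intro hall h hh
      obtain ⟨g, hg, hb'⟩ := hb.2 h hh
      exact (bisim_out hb' .O).mp (hall g hg)
    · intro hall g hg
      obtain ⟨h, hh, hb'⟩ := hb.1 g hg
      exact (bisim_out hb' .O).mpr (hall h hh)
termination_by sizeOf G + sizeOf H
decreasing_by all_goals
  first
  | (have := sizeOf_lt_of_mem hg; have := sizeOf_lt_of_mem hh; omega)

theorem bisim_outcome {G H : IGame} (hb : Bisim G H) : outcome G = outcome H :=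
  Set.ext fun p => bisim_out hb p

theorem bisim_add_left {X A B : IGame} (h : Bisim A B) : Bisim (add X A) (add X B) := by
  rw [bisim_iff]
  refine ⟨fun x hx => ?_, fun x hx => ?_⟩
  · rcases mem_opts_add.mp hx with ⟨g, hg, rfl⟩ | ⟨a, ha, rfl⟩
    · exact ⟨add g B, mem_opts_add.mpr (Or.inl ⟨g, hg, rfl⟩), bisim_add_left h⟩
    · obtain ⟨b, hbm, hb'⟩ := (bisim_iff.mp h).1 a ha
      exact ⟨add X b, mem_opts_add.mpr (Or.inr ⟨b, hbm, rfl⟩), bisim_add_left hb'⟩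
  · rcases mem_opts_add.mp hx with ⟨g, hg, rfl⟩ | ⟨b, hbm, rfl⟩
    · exact ⟨add g A, mem_opts_add.mpr (Or.inl ⟨g, hg, rfl⟩), bisim_add_left h⟩
    · obtain ⟨a, ha, hb'⟩ := (bisim_iff.mp h).2 b hbm
      exact ⟨add X a, mem_opts_add.mpr (Or.inr ⟨a, ha, rfl⟩), bisim_add_left hb'⟩
termination_by sizeOf X + sizeOf A + sizeOf B
decreasing_by
  · have := sizeOf_lt_of_mem hg; omega
  · have := sizeOf_lt_of_mem ha; have := sizeOf_lt_of_mem hbm; omega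
  · have := sizeOf_lt_of_mem hg; omega
  · have := sizeOf_lt_of_mem ha; have := sizeOf_lt_of_mem hbm; omega

theorem opts_nim_zero : (nim 0).opts = [] := rfl

theorem bisim_add_nim0 (H : IGame) : Bisim (add (nim 0) H) H := by
  rw [bisim_iff]
  refine ⟨fun x hx => ?_, fun h hh => ?_⟩
  · rcases mem_opts_add.mp hx with ⟨g, hg, rfl⟩ | ⟨h, hh, rfl⟩
    · simp [opts_nim_zero] at hg
    · exact ⟨h, hh, bisim_add_nim0 h⟩
  · exact ⟨add (nim 0) h, mem_opts_add.mpr (Or.inr ⟨h, hh, rfl⟩), bisim_add_nim0 h⟩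
termination_by sizeOf H
decreasing_by all_goals exact sizeOf_lt_of_mem hh

/-- canonical form of `k·* + G` -/
def St : ℕ → IGame → IGame
  | 0, G => mk (G.opts.attach.map fun g => St 0 g.1)
  | k+1, G => mk (St k G :: G.opts.attach.map fun g => St (k+1) g.1)
termination_by k G => (k, sizeOf G)
decreasing_by
  · have := sizeOf_lt_of_mem g.2
    exact Prod.Lex.right 0 this
  · exact Prod.Lex.left _ _ (Nat.lt_succ_self k)
  · have := sizeOf_lt_of_mem g.2
    exact Prod.Lex.right (k+1) this

theorem mem_opts_St_zero {x G : IGame} :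
    x ∈ (St 0 G).opts ↔ ∃ g ∈ G.opts, x = St 0 g := by
  rw [St]
  simp only [opts, List.mem_map, List.mem_attach, true_and, Subtype.exists]
  constructor
  · rintro ⟨g, hg, rfl⟩; exact ⟨g, hg, rfl⟩
  · rintro ⟨g, hg, rfl⟩; exact ⟨g, hg, rfl⟩

theorem mem_opts_St_succ {k : ℕ} {x G : IGame} :
    x ∈ (St (k+1) G).opts ↔ x = St k G ∨ ∃ g ∈ G.opts, x = St (k+1) g := by
  rw [St]
  simp only [opts, List.mem_cons, List.mem_map, List.mem_attach, true_and, Subtype.exists]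
  constructor
  · rintro (rfl | ⟨g, hg, rfl⟩)
    · exact Or.inl rfl
    · exact Or.inr ⟨g, hg, rfl⟩
  · rintro (rfl | ⟨g, hg, rfl⟩)
    · exact Or.inl rfl
    · exact Or.inr ⟨g, hg, rfl⟩

theorem bisim_st_zero (G : IGame) : Bisim G (St 0 G) := by
  rw [bisim_iff]
  refine ⟨fun g hg => ⟨St 0 g, mem_opts_St_zero.mpr ⟨g, hg, rfl⟩, bisim_st_zero g⟩,
    fun x hx => ?_⟩
  obtain ⟨g, hg, rfl⟩ := mem_opts_St_zero.mp hx
  exact ⟨g, hg, bisim_st_zero g⟩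
termination_by sizeOf G
decreasing_by all_goals exact sizeOf_lt_of_mem hg

theorem opts_nim_one : (nim 1).opts = [nim 0] := rfl

theorem bisim_add_st (k : ℕ) (H : IGame) : Bisim (add (nim 1) (St k H)) (St (k+1) H) := by
  rw [bisim_iff]
  constructor
  · intro x hx
    rcases mem_opts_add.mp hx with ⟨g, hg, rfl⟩ | ⟨y, hy, rfl⟩
    · rw [opts_nim_one, List.mem_singleton] at hg
      subst hg
      exact ⟨St k H, mem_opts_St_succ.mpr (Or.inl rfl), bisim_add_nim0 _⟩
    · cases k with
      | zero =>
        obtain ⟨h, hh, rfl⟩ := mem_opts_St_zero.mp hy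
        exact ⟨St 1 h, mem_opts_St_succ.mpr (Or.inr ⟨h, hh, rfl⟩), bisim_add_st 0 h⟩
      | succ j =>
        rcases mem_opts_St_succ.mp hy with rfl | ⟨h, hh, rfl⟩
        · exact ⟨St (j+1) H, mem_opts_St_succ.mpr (Or.inl rfl), bisim_add_st j H⟩
        · exact ⟨St (j+2) h, mem_opts_St_succ.mpr (Or.inr ⟨h, hh, rfl⟩), bisim_add_st (j+1) h⟩
  · intro x hx
    rcases mem_opts_St_succ.mp hx with rfl | ⟨h, hh, rfl⟩
    · exact ⟨add (nim 0) (St k H),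
        mem_opts_add.mpr (Or.inl ⟨nim 0, by rw [opts_nim_one]; exact List.mem_singleton.mpr rfl, rfl⟩),
        bisim_add_nim0 _⟩
    · refine ⟨add (nim 1) (St k h), mem_opts_add.mpr (Or.inr ⟨St k h, ?_, rfl⟩), bisim_add_st k h⟩
      cases k with
      | zero => exact mem_opts_St_zero.mpr ⟨h, hh, rfl⟩
      | succ j => exact mem_opts_St_succ.mpr (Or.inr ⟨h, hh, rfl⟩)
termination_by k + sizeOf H
decreasing_by
  · have := sizeOf_lt_of_mem hh; omega
  · omega
  · have := sizeOf_lt_of_mem hh; omega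
  · have := sizeOf_lt_of_mem hh; omega

theorem bisim_addStars_st (k : ℕ) (G : IGame) : Bisim (addStars k G) (St k G) := by
  induction k with
  | zero => exact bisim_st_zero G
  | succ k ih => exact bisim_trans (bisim_add_left ih) (bisim_add_st k G)

theorem outcome_addStars_st (k : ℕ) (G : IGame) :
    outcome (addStars k G) = outcome (St k G) :=
  bisim_outcome (bisim_addStars_st k G)
/-- (Nim Periodicity) If every option of `G` is 3-periodic and
`o(G) = o(*+*+*+G)`, then `G` is 3-periodic. -/
theorem nim_periodicity (G : IGame)
    (hopts : ∀ G' ∈ G.opts, Periodic3 G')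
    (hG : outcome G = outcome (addStars 3 G)) :
    Periodic3 G := by
  have key : ∀ k, ∀ p, out (St k G) p ↔ out (St (k+3) G) p := by
    intro k
    induction k with
    | zero =>
      intro p
      have h0 : outcome (St 0 G) = outcome (St 3 G) := by
        calc outcome (St 0 G) = outcome G := (bisim_outcome (bisim_st_zero G)).symm
          _ = outcome (addStars 3 G) := hG
          _ = outcome (St 3 G) := outcome_addStars_st 3 G
      exact Set.ext_iff.mp h0 p
    | succ k ih =>
      have hopt : ∀ g ∈ G.opts, ∀ p, out (St (k+1) g) p ↔ out (St (k+4) g) p := by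
        intro g hg p
        have : outcome (St (k+1) g) = outcome (St (k+4) g) := by
          rw [← outcome_addStars_st, ← outcome_addStars_st]
          exact hopts g hg (k+1)
        exact Set.ext_iff.mp this p
      have h34 : k + 1 + 3 = (k + 3) + 1 := by omega
      rw [h34]
      have memL : ∀ x, x ∈ (St (k+1) G).opts ↔ x = St k G ∨ ∃ g ∈ G.opts, x = St (k+1) g :=
        fun x => mem_opts_St_succ
      have memR : ∀ x, x ∈ (St ((k+3)+1) G).opts ↔
          x = St (k+3) G ∨ ∃ g ∈ G.opts, x = St ((k+3)+1) g :=
        fun x => mem_opts_St_succ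
      have h41 : (k + 3) + 1 = k + 4 := by omega
      intro p
      cases p with
      | N =>
        rw [out_N, out_N]
        constructor
        · rintro ⟨x, hx, hp⟩
          rcases (memL x).mp hx with rfl | ⟨g, hg, rfl⟩
          · exact ⟨St (k+3) G, (memR _).mpr (Or.inl rfl), (ih .P).mp hp⟩
          · refine ⟨St ((k+3)+1) g, (memR _).mpr (Or.inr ⟨g, hg, rfl⟩), ?_⟩
            rw [h41]; exact (hopt g hg .P).mp hp
        · rintro ⟨x, hx, hp⟩
          rcases (memR x).mp hx with rfl | ⟨g, hg, rfl⟩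
          · exact ⟨St k G, (memL _).mpr (Or.inl rfl), (ih .P).mpr hp⟩
          · refine ⟨St (k+1) g, (memL _).mpr (Or.inr ⟨g, hg, rfl⟩), ?_⟩
            rw [h41] at hp; exact (hopt g hg .P).mpr hp
      | O =>
        rw [out_O, out_O]
        constructor
        · intro hall x hx
          rcases (memR x).mp hx with rfl | ⟨g, hg, rfl⟩
          · exact (ih .N).mp (hall _ ((memL _).mpr (Or.inl rfl)))
          · rw [h41]
            exact (hopt g hg .N).mp (hall _ ((memL _).mpr (Or.inr ⟨g, hg, rfl⟩)))
        · intro hall x hx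
          rcases (memL x).mp hx with rfl | ⟨g, hg, rfl⟩
          · exact (ih .N).mpr (hall _ ((memR _).mpr (Or.inl rfl)))
          · refine (hopt g hg .N).mpr ?_
            have := hall _ ((memR _).mpr (Or.inr ⟨g, hg, rfl⟩))
            rwa [h41] at this
      | P =>
        rw [out_P, out_P]
        constructor
        · intro hall x hx
          rcases (memR x).mp hx with rfl | ⟨g, hg, rfl⟩
          · exact (ih .O).mp (hall _ ((memL _).mpr (Or.inl rfl)))
          · rw [h41]
            exact (hopt g hg .O).mp (hall _ ((memL _).mpr (Or.inr ⟨g, hg, rfl⟩)))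
        · intro hall x hx
          rcases (memL x).mp hx with rfl | ⟨g, hg, rfl⟩
          · exact (ih .O).mpr (hall _ ((memR _).mpr (Or.inl rfl)))
          · refine (hopt g hg .O).mpr ?_
            have := hall _ ((memR _).mpr (Or.inr ⟨g, hg, rfl⟩))
            rwa [h41] at this
  intro k
  rw [outcome_addStars_st, outcome_addStars_st]
  exact Set.ext fun p => key k p

end IGame
end
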